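/- Fix integers p, q ≥ 2 and indices 1 ≤ i < p, 1 ≤ j < q. Then the set F_{ij} = {C ∈ M_{p×q} : c_{i,j} + c_{i+1,j+1} = c_{i,j+1} + c_{i+1,j}} equals the convex hull of V \ {(1/(i(q−j))) · NE(i×(q−j)), (1/((p−i)j)) · SW((p−i)×j)}, where V is the vertex set of M_{p×q} consisting of the matrices (1/(ab))·NE(a×b) and (1/(ab))·SW(a×b) for 1 ≤ a < p, 1 ≤ b < q, together with (1/q)·HOR(i) for 1 ≤ i ≤ p and (1/p)·VER(j) for 1 ≤ j ≤ q. -/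

import Mathlib

open Finset

/-- The Monge property for a `p × q` real matrix (indices are 0-based). -/
def IsMonge {p q : ℕ} (C : Matrix (Fin p) (Fin q) ℝ) : Prop :=
  ∀ i I : Fin p, ∀ j J : Fin q, i < I → j < J → C i j + C I J ≤ C i J + C I j

/-- The Monge polytope: `p × q` matrices with nonnegative entries summing to 1 that
have the Monge property. -/
def Mpq (p q : ℕ) : Set (Matrix (Fin p) (Fin q) ℝ) :=
  {C | (∀ i j, 0 ≤ C i j) ∧ (∑ i, ∑ j, C i j) = 1 ∧ IsMonge C}

/-- `NE p q a b`: the `p × q` 0/1 matrix with (1-based) `(k, l)` entry 1 iff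
`k ≤ a ∧ l > q - b`. -/
def NE (p q a b : ℕ) : Matrix (Fin p) (Fin q) ℝ :=
  Matrix.of fun k l => if k.val + 1 ≤ a ∧ q - b < l.val + 1 then 1 else 0

/-- `SW p q a b`: the `p × q` 0/1 matrix with (1-based) `(k, l)` entry 1 iff
`k > p - a ∧ l ≤ b`. -/
def SW (p q a b : ℕ) : Matrix (Fin p) (Fin q) ℝ :=
  Matrix.of fun k l => if p - a < k.val + 1 ∧ l.val + 1 ≤ b then 1 else 0

/-- `HOR p q i`: the `p × q` 0/1 matrix with (1-based) `(k, l)` entry 1 iff `k = i`. -/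
def HOR (p q i : ℕ) : Matrix (Fin p) (Fin q) ℝ :=
  Matrix.of fun k _ => if k.val + 1 = i then 1 else 0

/-- `VER p q j`: the `p × q` 0/1 matrix with (1-based) `(k, l)` entry 1 iff `l = j`. -/
def VER (p q j : ℕ) : Matrix (Fin p) (Fin q) ℝ :=
  Matrix.of fun _ l => if l.val + 1 = j then 1 else 0

/-- The candidate vertex set of the Monge polytope `M_{p×q}`. -/
def Vpq (p q : ℕ) : Set (Matrix (Fin p) (Fin q) ℝ) :=
  {M | ∃ a ∈ Finset.Ico 1 p, ∃ b ∈ Finset.Ico 1 q,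
      M = (1 / ((a : ℝ) * (b : ℝ))) • NE p q a b} ∪
  {M | ∃ a ∈ Finset.Ico 1 p, ∃ b ∈ Finset.Ico 1 q,
      M = (1 / ((a : ℝ) * (b : ℝ))) • SW p q a b} ∪
  {M | ∃ i ∈ Finset.Icc 1 p, M = (1 / (q : ℝ)) • HOR p q i} ∪
  {M | ∃ j ∈ Finset.Icc 1 q, M = (1 / (p : ℝ)) • VER p q j}

/-!
Entrywise nonnegative Monge matrices form the polyhedral cone cut out by the entries and the
adjacent second differences `c k (l+1) + c (k+1) l - c k l - c (k+1) (l+1)`. Every nonzero `C`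
in this cone dominates a generator whose support in these coordinates lies inside that of `C`:
if some second difference is positive at `(k, l)`, then `C` is positive on the whole block
north-east or south-west of that cell, and the matching `NE` or `SW` block matrix has its only
nonzero second difference there; if all second differences vanish, `C` is a nonnegative
combination of `HOR`s and `VER`s. Peeling off generators (the ratio test) shows that the cone is
generated by `Vpq`, and normalising the entry sum gives `M_{p×q} = conv Vpq`. The equation
defining `F_{ij}` says that the second difference at `(i-1, j-1)` vanishes; this functional is
nonnegative on `M_{p×q}` and nonzero at exactly two vertices, `NE(i × (q-j))` and
`SW((p-i) × j)`, so the face it cuts out is the hull of the others.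
-/

section CoordinateCone

variable {E ι : Type*} [AddCommGroup E] [Module ℝ E] [Fintype ι]

noncomputable def coordSupport (Λ : ι → E →ₗ[ℝ] ℝ) (x : E) : Finset ι := {i | Λ i x ≠ 0}

lemma mem_coordSupport {Λ : ι → E →ₗ[ℝ] ℝ} {x : E} {i : ι} :
    i ∈ coordSupport Λ x ↔ Λ i x ≠ 0 := by
  simp [coordSupport]

/-- The ratio test of the simplex method. -/
lemma exists_sub_smul_nonneg_of_coordSupport_subset {Λ : ι → E →ₗ[ℝ] ℝ} {x g : E}
    (hx : ∀ i, 0 ≤ Λ i x) (hg : ∀ i, 0 ≤ Λ i g) (hg₀ : (coordSupport Λ g).Nonempty)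
    (hgx : coordSupport Λ g ⊆ coordSupport Λ x) :
    ∃ t : ℝ, 0 < t ∧ (∀ i, 0 ≤ Λ i (x - t • g)) ∧
      ∃ i ∈ coordSupport Λ x, Λ i (x - t • g) = 0 := by
  obtain ⟨i₀, hi₀, hmin⟩ := (coordSupport Λ g).exists_min_image (fun i => Λ i x / Λ i g) hg₀
  have hpos : ∀ i ∈ coordSupport Λ g, 0 < Λ i g ∧ 0 < Λ i x := fun i hi =>
    ⟨(hg i).lt_of_ne' (mem_coordSupport.1 hi),
      (hx i).lt_of_ne' (mem_coordSupport.1 (hgx hi))⟩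
  refine ⟨Λ i₀ x / Λ i₀ g, div_pos (hpos i₀ hi₀).2 (hpos i₀ hi₀).1, fun i => ?_,
    i₀, hgx hi₀, ?_⟩
  · rw [map_sub, map_smul, smul_eq_mul, sub_nonneg]
    by_cases hi : i ∈ coordSupport Λ g
    · exact (le_div_iff₀ (hpos i hi).1).1 (hmin i hi)
    · rw [mem_coordSupport, not_not] at hi
      simpa [hi] using hx i
  · rw [map_sub, map_smul, smul_eq_mul, div_mul_cancel₀ _ (hpos i₀ hi₀).1.ne', sub_self]

/-- Subtracting the largest admissible multiple of the point `g` strictly shrinks the support,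
so induction on its size applies. -/
theorem PointedCone.mem_of_forall_exists_coordSupport_subset (P : PointedCone ℝ E)
    (Λ : ι → E →ₗ[ℝ] ℝ) (hsep : ∀ x, coordSupport Λ x = ∅ → x = 0)
    (hpeel : ∀ x, (∀ i, 0 ≤ Λ i x) → (coordSupport Λ x).Nonempty →
      ∃ g ∈ P, (∀ i, 0 ≤ Λ i g) ∧ (coordSupport Λ g).Nonempty ∧
        coordSupport Λ g ⊆ coordSupport Λ x)
    {x : E} (hx : ∀ i, 0 ≤ Λ i x) : x ∈ P := by
  induction hn : (coordSupport Λ x).card using Nat.strong_induction_on generalizing x with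
  | _ n ih =>
  rcases (coordSupport Λ x).eq_empty_or_nonempty with hx₀ | hx₀
  · rw [hsep x hx₀]
    exact P.zero_mem
  obtain ⟨g, hgP, hg, hg₀, hgx⟩ := hpeel x hx hx₀
  obtain ⟨t, ht, hx', i, hi, hi'⟩ := exists_sub_smul_nonneg_of_coordSupport_subset hx hg hg₀ hgx
  have hsub : coordSupport Λ (x - t • g) ⊂ coordSupport Λ x := by
    refine (Finset.ssubset_iff_of_subset fun j hj => ?_).2
      ⟨i, hi, fun h => mem_coordSupport.1 h hi'⟩
    by_contra hjx
    have hjg : j ∉ coordSupport Λ g := fun h => hjx (hgx h)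
    rw [mem_coordSupport, not_not] at hjx hjg
    exact mem_coordSupport.1 hj (by simp [hjx, hjg])
  rw [← sub_add_cancel x (t • g)]
  exact P.add_mem (ih _ (hn ▸ Finset.card_lt_card hsub) hx' rfl) (P.smul_mem ht.le hgP)

end CoordinateCone

section ConvexHull

variable {E : Type*} [AddCommGroup E] [Module ℝ E] {s : Set E} {x : E}

lemma PointedCone.mem_hull_of_one_div_smul_mem {c : ℝ} (hc : 0 < c) (hx : (1 / c) • x ∈ s) :
    x ∈ PointedCone.hull ℝ s := by
  have := (PointedCone.hull ℝ s).smul_mem hc.le (PointedCone.subset_hull hx)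
  rwa [smul_smul, mul_one_div_cancel hc.ne', one_smul] at this

lemma mem_convexHull_of_mem_hull (φ : E →ₗ[ℝ] ℝ) (hφ : ∀ v ∈ s, φ v = 1)
    (hx : x ∈ PointedCone.hull ℝ s) (hφx : φ x = 1) : x ∈ convexHull ℝ s := by
  obtain ⟨c, hcs, hc₀, rfl⟩ := PointedCone.mem_hull_set.1 hx
  have hsum : ∑ y ∈ c.support, c y = 1 := by
    rw [← hφx, Finsupp.sum, map_sum]
    exact Finset.sum_congr rfl fun y hy => by rw [map_smul, hφ y (hcs hy), smul_eq_mul, mul_one]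
  have := c.support.centerMass_mem_convexHull (fun y _ => hc₀ y) (hsum ▸ one_pos)
    (z := id) fun y hy => hcs hy
  rwa [Finset.centerMass, hsum, inv_one, one_smul] at this

lemma convexHull_inter_setOf_eq_zero (ψ : E →ₗ[ℝ] ℝ) (hs : ∀ v ∈ s, 0 ≤ ψ v) :
    convexHull ℝ s ∩ {x | ψ x = 0} = convexHull ℝ {v ∈ s | ψ v = 0} := by
  refine subset_antisymm (fun x ⟨hx, hψx⟩ => ?_) (convexHull_min
    (fun v hv => ⟨subset_convexHull ℝ s hv.1, hv.2⟩)
    ((convex_convexHull ℝ s).inter (convex_hyperplane ψ.isLinear 0)))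
  suffices convexHull ℝ s ⊆ {y | 0 ≤ ψ y ∧ (ψ y = 0 → y ∈ convexHull ℝ {v ∈ s | ψ v = 0})} from
    (this hx).2 hψx
  refine convexHull_min (fun v hv => ⟨hs v hv, fun h => subset_convexHull ℝ _ ⟨hv, h⟩⟩) ?_
  rintro y ⟨hy, hy₀⟩ z ⟨hz, hz₀⟩ a b ha hb hab
  have hψ : ψ (a • y + b • z) = a * ψ y + b * ψ z := by simp
  refine ⟨hψ ▸ by positivity, fun h => ?_⟩
  obtain ⟨hay, hbz⟩ := (add_eq_zero_iff_of_nonneg (mul_nonneg ha hy) (mul_nonneg hb hz)).1 (hψ ▸ h)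
  rcases mul_eq_zero.1 hay with rfl | hy'
  · obtain rfl : b = 1 := by simpa using hab
    simpa using hz₀ (by simpa using hbz)
  rcases mul_eq_zero.1 hbz with rfl | hz'
  · obtain rfl : a = 1 := by simpa using hab
    simpa using hy₀ hy'
  exact convex_convexHull ℝ _ (hy₀ hy') (hz₀ hz') ha hb hab

end ConvexHull

section SecondDifferences

variable {p q : ℕ}

noncomputable def gridEntry (k l : ℕ) : Matrix (Fin p) (Fin q) ℝ →ₗ[ℝ] ℝ :=
  if h : k < p ∧ l < q then Matrix.entryLinearMap ℝ ℝ ⟨k, h.1⟩ ⟨l, h.2⟩ else 0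

lemma gridEntry_apply (C : Matrix (Fin p) (Fin q) ℝ) {k l : ℕ} (hk : k < p) (hl : l < q) :
    gridEntry k l C = C ⟨k, hk⟩ ⟨l, hl⟩ := by
  simp [gridEntry, hk, hl]

@[simp]
lemma gridEntry_val (C : Matrix (Fin p) (Fin q) ℝ) (k : Fin p) (l : Fin q) :
    gridEntry k l C = C k l :=
  gridEntry_apply C k.isLt l.isLt

noncomputable def mongeDiff (k l : ℕ) : Matrix (Fin p) (Fin q) ℝ →ₗ[ℝ] ℝ :=
  gridEntry k (l + 1) + gridEntry (k + 1) l - gridEntry k l - gridEntry (k + 1) (l + 1)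

lemma mongeDiff_apply (C : Matrix (Fin p) (Fin q) ℝ) (k l : ℕ) :
    mongeDiff k l C =
      gridEntry k (l + 1) C + gridEntry (k + 1) l C - gridEntry k l C -
        gridEntry (k + 1) (l + 1) C := rfl

lemma mongeDiff_apply_of_lt (C : Matrix (Fin p) (Fin q) ℝ) {k l : ℕ} (hk : k + 1 < p)
    (hl : l + 1 < q) :
    mongeDiff k l C = C ⟨k, by omega⟩ ⟨l + 1, hl⟩ + C ⟨k + 1, hk⟩ ⟨l, by omega⟩ -
      C ⟨k, by omega⟩ ⟨l, by omega⟩ - C ⟨k + 1, hk⟩ ⟨l + 1, hl⟩ := by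
  rw [mongeDiff_apply, gridEntry_apply, gridEntry_apply, gridEntry_apply, gridEntry_apply]

lemma sum_Ico_sum_Ico_secondDiff (f : ℕ → ℕ → ℝ) {k₁ k₂ l₁ l₂ : ℕ} (hk : k₁ ≤ k₂)
    (hl : l₁ ≤ l₂) :
    ∑ k ∈ Ico k₁ k₂, ∑ l ∈ Ico l₁ l₂, (f k (l + 1) + f (k + 1) l - f k l - f (k + 1) (l + 1)) =
      f k₁ l₂ + f k₂ l₁ - f k₁ l₁ - f k₂ l₂ := by
  have hrow (k : ℕ) : ∑ l ∈ Ico l₁ l₂, (f k (l + 1) + f (k + 1) l - f k l - f (k + 1) (l + 1)) =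
      (f (k + 1) l₁ - f (k + 1) l₂) - (f k l₁ - f k l₂) := by
    calc _ = -∑ l ∈ Ico l₁ l₂, ((f (k + 1) (l + 1) - f k (l + 1)) - (f (k + 1) l - f k l)) := by
          rw [← Finset.sum_neg_distrib]
          exact Finset.sum_congr rfl fun l _ => by ring
      _ = _ := by
          rw [Finset.sum_Ico_sub (fun l => f (k + 1) l - f k l) hl]
          ring
  rw [Finset.sum_congr rfl fun k _ => hrow k, Finset.sum_Ico_sub (fun k => f k l₁ - f k l₂) hk]
  ring

lemma sum_Ico_sum_Ico_mongeDiff (C : Matrix (Fin p) (Fin q) ℝ) {k₁ k₂ l₁ l₂ : ℕ}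
    (hk : k₁ ≤ k₂) (hl : l₁ ≤ l₂) :
    ∑ k ∈ Ico k₁ k₂, ∑ l ∈ Ico l₁ l₂, mongeDiff k l C =
      gridEntry k₁ l₂ C + gridEntry k₂ l₁ C - gridEntry k₁ l₁ C - gridEntry k₂ l₂ C :=
  sum_Ico_sum_Ico_secondDiff (fun k l => gridEntry k l C) hk hl

lemma mongeDiff_le_sum_Ico_sum_Ico {C : Matrix (Fin p) (Fin q) ℝ}
    (hC : ∀ k l, k + 1 < p → l + 1 < q → 0 ≤ mongeDiff k l C) {k₀ l₀ k₁ k₂ l₁ l₂ : ℕ}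
    (hk₀ : k₀ ∈ Ico k₁ k₂) (hl₀ : l₀ ∈ Ico l₁ l₂) (hk₂ : k₂ < p) (hl₂ : l₂ < q) :
    mongeDiff k₀ l₀ C ≤ ∑ k ∈ Ico k₁ k₂, ∑ l ∈ Ico l₁ l₂, mongeDiff k l C := by
  have hnn : ∀ k ∈ Ico k₁ k₂, ∀ l ∈ Ico l₁ l₂, 0 ≤ mongeDiff k l C := fun k hk l hl =>
    hC k l (by simp at hk; omega) (by simp at hl; omega)
  calc mongeDiff k₀ l₀ C ≤ ∑ l ∈ Ico l₁ l₂, mongeDiff k₀ l C :=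
        Finset.single_le_sum (hnn k₀ hk₀) hl₀
    _ ≤ _ := Finset.single_le_sum (fun k hk => Finset.sum_nonneg (hnn k hk)) hk₀

lemma isMonge_iff_mongeDiff_nonneg {C : Matrix (Fin p) (Fin q) ℝ} :
    IsMonge C ↔ ∀ k l, k + 1 < p → l + 1 < q → 0 ≤ mongeDiff k l C := by
  constructor
  · intro hM k l hk hl
    have := hM ⟨k, by omega⟩ ⟨k + 1, hk⟩ ⟨l, by omega⟩ ⟨l + 1, hl⟩
      (Fin.mk_lt_mk.2 k.lt_succ_self) (Fin.mk_lt_mk.2 l.lt_succ_self)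
    rw [mongeDiff_apply_of_lt C hk hl]
    linarith
  · intro hC i I j J hiI hjJ
    have h := sum_Ico_sum_Ico_mongeDiff C hiI.le hjJ.le
    have h₀ := Finset.sum_nonneg fun k (hk : k ∈ Ico i.val I.val) =>
      Finset.sum_nonneg fun l (hl : l ∈ Ico j.val J.val) =>
        hC k l (by simp at hk; omega) (by simp at hl; omega)
    simp only [gridEntry_val] at h
    linarith

end SecondDifferences

section MongeCone

variable {p q : ℕ}

noncomputable def mongeCoord :
    (Fin p × Fin q) ⊕ (Fin (p - 1) × Fin (q - 1)) → Matrix (Fin p) (Fin q) ℝ →ₗ[ℝ] ℝ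
  | .inl x => Matrix.entryLinearMap ℝ ℝ x.1 x.2
  | .inr x => mongeDiff x.1 x.2

lemma forall_mongeCoord_nonneg_iff {C : Matrix (Fin p) (Fin q) ℝ} :
    (∀ x, 0 ≤ mongeCoord x C) ↔ (∀ k l, 0 ≤ C k l) ∧ IsMonge C := by
  rw [isMonge_iff_mongeDiff_nonneg, Sum.forall, Prod.forall, Prod.forall]
  refine and_congr Iff.rfl ⟨fun h k l hk hl => h ⟨k, by omega⟩ ⟨l, by omega⟩,
    fun h k l => h k l (by omega) (by omega)⟩

lemma eq_zero_of_coordSupport_mongeCoord_eq_empty {C : Matrix (Fin p) (Fin q) ℝ}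
    (hC : coordSupport mongeCoord C = ∅) : C = 0 := by
  ext k l
  by_contra h
  exact (Finset.eq_empty_iff_forall_notMem.1 hC) (.inl (k, l)) (mem_coordSupport.2 h)

lemma coordSupport_mongeCoord_nonempty_and_subset {C G : Matrix (Fin p) (Fin q) ℝ} {k₀ l₀ : ℕ}
    (hk₀ : k₀ + 1 < p) (hl₀ : l₀ + 1 < q) (hG : ∀ k l, G k l ≠ 0 → 0 < C k l)
    (hGd : ∀ k l, k + 1 < p → l + 1 < q → mongeDiff k l G ≠ 0 → k = k₀ ∧ l = l₀)
    (hG₀ : mongeDiff k₀ l₀ G ≠ 0) (hd : 0 < mongeDiff k₀ l₀ C) :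
    (coordSupport mongeCoord G).Nonempty ∧
      coordSupport mongeCoord G ⊆ coordSupport mongeCoord C := by
  refine ⟨⟨.inr (⟨k₀, by omega⟩, ⟨l₀, by omega⟩), mem_coordSupport.2 hG₀⟩, ?_⟩
  rintro (⟨k, l⟩ | ⟨k, l⟩) h <;> rw [mem_coordSupport] at h ⊢
  · exact (hG k l h).ne'
  · obtain ⟨rfl, rfl⟩ := hGd k l (by omega) (by omega) h
    exact hd.ne'

/-- Otherwise a zero in each block spans a rectangle whose Monge inequality is violated by the
positive second difference it contains. -/
lemma pos_northEast_or_pos_southWest {C : Matrix (Fin p) (Fin q) ℝ} (hC : ∀ k l, 0 ≤ C k l)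
    (hM : IsMonge C) {k₀ l₀ : ℕ} (hd : 0 < mongeDiff k₀ l₀ C) :
    (∀ (k : Fin p) (l : Fin q), k.val ≤ k₀ → l₀ < l.val → 0 < C k l) ∨
      (∀ (k : Fin p) (l : Fin q), k₀ < k.val → l.val ≤ l₀ → 0 < C k l) := by
  by_contra! ⟨⟨k₁, l₁, hk₁, hl₁, h₁⟩, ⟨k₂, l₂, hk₂, hl₂, h₂⟩⟩
  have hsum := sum_Ico_sum_Ico_mongeDiff C (k₁ := k₁) (k₂ := k₂) (l₁ := l₂) (l₂ := l₁)
    (by omega) (by omega)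
  have hle := mongeDiff_le_sum_Ico_sum_Ico (isMonge_iff_mongeDiff_nonneg.1 hM)
    (Finset.mem_Ico.2 ⟨hk₁, hk₂⟩) (Finset.mem_Ico.2 ⟨hl₂, hl₁⟩) k₂.isLt l₁.isLt
  simp only [gridEntry_val] at hsum
  linarith [hC k₁ l₂, hC k₂ l₁]

noncomputable def entrySum : Matrix (Fin p) (Fin q) ℝ →ₗ[ℝ] ℝ :=
  ∑ k, ∑ l, Matrix.entryLinearMap ℝ ℝ k l

lemma entrySum_apply (C : Matrix (Fin p) (Fin q) ℝ) : entrySum C = ∑ k, ∑ l, C k l := by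
  simp [entrySum]

end MongeCone

section Generators

variable {p q : ℕ}

lemma card_filter_fin_eq_sub {n m m' : ℕ} (P : Fin n → Prop) [DecidablePred P]
    (hP : ∀ k : Fin n, P k ↔ m ≤ k.val ∧ k.val < m') (h : m' ≤ n) : #{k | P k} = m' - m := by
  rw [← card_map Fin.valEmbedding, ← Nat.card_Ico]
  congr 1
  ext x
  simp only [mem_map, mem_filter, mem_univ, true_and, Fin.valEmbedding_apply, mem_Ico, hP]
  exact ⟨fun ⟨k, hk, hkx⟩ => hkx ▸ hk, fun hx => ⟨⟨x, by omega⟩, hx, rfl⟩⟩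

lemma sum_sum_ite_and {m n : ℕ} (A : Fin m → Prop) (B : Fin n → Prop) [DecidablePred A]
    [DecidablePred B] :
    ∑ k, ∑ l, (if A k ∧ B l then (1 : ℝ) else 0) = #{k | A k} * #{l | B l} := by
  simp_rw [← sum_boole, sum_mul_sum, ite_zero_mul_ite_zero, mul_one]

lemma mongeDiff_NE (a b : ℕ) {k l : ℕ} (hk : k + 1 < p) (hl : l + 1 < q) :
    mongeDiff k l (NE p q a b) = if k + 1 = a ∧ l + 1 = q - b then 1 else 0 := by
  simp only [mongeDiff_apply_of_lt _ hk hl, NE, Matrix.of_apply]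
  split_ifs <;> first | omega | norm_num

lemma mongeDiff_SW (a b : ℕ) {k l : ℕ} (hk : k + 1 < p) (hl : l + 1 < q) :
    mongeDiff k l (SW p q a b) = if k + 1 = p - a ∧ l + 1 = b then 1 else 0 := by
  simp only [mongeDiff_apply_of_lt _ hk hl, SW, Matrix.of_apply]
  split_ifs <;> first | omega | norm_num

lemma mongeDiff_HOR (i : ℕ) {k l : ℕ} (hk : k + 1 < p) (hl : l + 1 < q) :
    mongeDiff k l (HOR p q i) = 0 := by
  simp only [mongeDiff_apply_of_lt _ hk hl, HOR, Matrix.of_apply]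
  ring

lemma mongeDiff_VER (j : ℕ) {k l : ℕ} (hk : k + 1 < p) (hl : l + 1 < q) :
    mongeDiff k l (VER p q j) = 0 := by
  simp only [mongeDiff_apply_of_lt _ hk hl, VER, Matrix.of_apply]
  ring

lemma mongeCoord_NE_nonneg (a b : ℕ) : ∀ x, 0 ≤ mongeCoord x (NE p q a b) := by
  rintro (⟨k, l⟩ | ⟨k, l⟩)
  · simp only [mongeCoord, Matrix.entryLinearMap_apply, NE, Matrix.of_apply]
    split_ifs <;> norm_num
  · rw [mongeCoord, mongeDiff_NE _ _ (by omega) (by omega)]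
    split_ifs <;> norm_num

lemma mongeCoord_SW_nonneg (a b : ℕ) : ∀ x, 0 ≤ mongeCoord x (SW p q a b) := by
  rintro (⟨k, l⟩ | ⟨k, l⟩)
  · simp only [mongeCoord, Matrix.entryLinearMap_apply, SW, Matrix.of_apply]
    split_ifs <;> norm_num
  · rw [mongeCoord, mongeDiff_SW _ _ (by omega) (by omega)]
    split_ifs <;> norm_num

lemma mongeCoord_HOR_nonneg (i : ℕ) : ∀ x, 0 ≤ mongeCoord x (HOR p q i) := by
  rintro (⟨k, l⟩ | ⟨k, l⟩)
  · simp only [mongeCoord, Matrix.entryLinearMap_apply, HOR, Matrix.of_apply]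
    split_ifs <;> norm_num
  · rw [mongeCoord, mongeDiff_HOR _ (by omega) (by omega)]

lemma mongeCoord_VER_nonneg (j : ℕ) : ∀ x, 0 ≤ mongeCoord x (VER p q j) := by
  rintro (⟨k, l⟩ | ⟨k, l⟩)
  · simp only [mongeCoord, Matrix.entryLinearMap_apply, VER, Matrix.of_apply]
    split_ifs <;> norm_num
  · rw [mongeCoord, mongeDiff_VER _ (by omega) (by omega)]

lemma entrySum_NE {a b : ℕ} (ha : a ≤ p) (hb : b ≤ q) : entrySum (NE p q a b) = a * b := by
  rw [entrySum_apply]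
  simp only [NE, Matrix.of_apply]
  rw [sum_sum_ite_and, card_filter_fin_eq_sub (m := 0) (m' := a) _ (fun k => by omega) ha,
    card_filter_fin_eq_sub (m := q - b) (m' := q) _ (fun l => by omega) le_rfl]
  push_cast [Nat.sub_sub_self hb, Nat.sub_zero]
  ring

lemma entrySum_SW {a b : ℕ} (ha : a ≤ p) (hb : b ≤ q) : entrySum (SW p q a b) = a * b := by
  rw [entrySum_apply]
  simp only [SW, Matrix.of_apply]
  rw [sum_sum_ite_and, card_filter_fin_eq_sub (m := p - a) (m' := p) _ (fun k => by omega) le_rfl,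
    card_filter_fin_eq_sub (m := 0) (m' := b) _ (fun l => by omega) hb]
  push_cast [Nat.sub_sub_self ha, Nat.sub_zero]
  ring

lemma entrySum_HOR {i : ℕ} (hi : i ∈ Icc 1 p) : entrySum (HOR p q i) = q := by
  rw [Finset.mem_Icc] at hi
  rw [entrySum_apply]
  simp only [HOR, Matrix.of_apply, sum_const, card_univ, Fintype.card_fin, nsmul_eq_mul,
    ← Finset.mul_sum, sum_boole]
  rw [card_filter_fin_eq_sub (m := i - 1) (m' := i) _ (fun k => by omega) hi.2]
  simp [Nat.sub_sub_self hi.1]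

lemma entrySum_VER {j : ℕ} (hj : j ∈ Icc 1 q) : entrySum (VER p q j) = p := by
  rw [Finset.mem_Icc] at hj
  rw [entrySum_apply]
  simp only [VER, Matrix.of_apply, sum_boole]
  rw [card_filter_fin_eq_sub (m := j - 1) (m' := j) _ (fun k => by omega) hj.2]
  simp [Nat.sub_sub_self hj.1]

end Generators

section MongePolytope

variable {p q : ℕ}

lemma NE_mem_hull_Vpq {a b : ℕ} (ha : a ∈ Ico 1 p) (hb : b ∈ Ico 1 q) :
    NE p q a b ∈ PointedCone.hull ℝ (Vpq p q) := by
  rw [Finset.mem_Ico] at ha hb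
  exact PointedCone.mem_hull_of_one_div_smul_mem
    (mul_pos (Nat.cast_pos.2 (by omega)) (Nat.cast_pos.2 (by omega)))
    (.inl (.inl (.inl ⟨a, by simp; omega, b, by simp; omega, rfl⟩)))

lemma SW_mem_hull_Vpq {a b : ℕ} (ha : a ∈ Ico 1 p) (hb : b ∈ Ico 1 q) :
    SW p q a b ∈ PointedCone.hull ℝ (Vpq p q) := by
  rw [Finset.mem_Ico] at ha hb
  exact PointedCone.mem_hull_of_one_div_smul_mem
    (mul_pos (Nat.cast_pos.2 (by omega)) (Nat.cast_pos.2 (by omega)))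
    (.inl (.inl (.inr ⟨a, by simp; omega, b, by simp; omega, rfl⟩)))

lemma HOR_mem_hull_Vpq [NeZero q] {i : ℕ} (hi : i ∈ Icc 1 p) :
    HOR p q i ∈ PointedCone.hull ℝ (Vpq p q) :=
  PointedCone.mem_hull_of_one_div_smul_mem (by simp [Nat.pos_of_neZero])
    (.inl (.inr ⟨i, hi, rfl⟩))

lemma VER_mem_hull_Vpq [NeZero p] {j : ℕ} (hj : j ∈ Icc 1 q) :
    VER p q j ∈ PointedCone.hull ℝ (Vpq p q) :=
  PointedCone.mem_hull_of_one_div_smul_mem (by simp [Nat.pos_of_neZero]) (.inr ⟨j, hj, rfl⟩)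

/-- Vanishing second differences make `C k l = C k 0 + C 0 l - C 0 0`; taking `k₀` with the
least first entry makes every coefficient of the decomposition `hC'` nonnegative. -/
lemma mem_hull_Vpq_of_mongeDiff_eq_zero [NeZero p] [NeZero q] {C : Matrix (Fin p) (Fin q) ℝ}
    (hC : ∀ k l, 0 ≤ C k l) (hd : ∀ k l, k + 1 < p → l + 1 < q → mongeDiff k l C = 0) :
    C ∈ PointedCone.hull ℝ (Vpq p q) := by
  have hadd (k : Fin p) (l : Fin q) : C k l + C 0 0 = C k 0 + C 0 l := by
    have h := sum_Ico_sum_Ico_mongeDiff C (k₁ := (0 : Fin p)) (l₁ := (0 : Fin q)) (k₂ := k)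
      (l₂ := l) (by simp) (by simp)
    rw [Finset.sum_eq_zero fun k hk => Finset.sum_eq_zero fun l hl =>
      hd k l (by simp at hk; omega) (by simp at hl; omega)] at h
    simp only [gridEntry_val] at h
    linarith
  obtain ⟨k₀, hk₀⟩ := Finite.exists_min fun k => C k 0
  have hC' : C = ∑ k, (C k 0 - C k₀ 0) • HOR p q (k + 1) + ∑ l, C k₀ l • VER p q (l + 1) := by
    ext k l
    simp [Matrix.sum_apply, HOR, VER, Fin.val_inj]
    linarith [hadd k l, hadd k₀ l]
  rw [hC']
  refine add_mem (sum_mem fun k _ => ?_) (sum_mem fun l _ => ?_)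
  · exact (PointedCone.hull ℝ _).smul_mem (sub_nonneg.2 (hk₀ k))
      (HOR_mem_hull_Vpq (by simp))
  · exact (PointedCone.hull ℝ _).smul_mem (hC k₀ l) (VER_mem_hull_Vpq (by simp))

lemma coordSupport_NE_subset {C : Matrix (Fin p) (Fin q) ℝ} {k₀ l₀ : ℕ} (hk₀ : k₀ + 1 < p)
    (hl₀ : l₀ + 1 < q) (hB : ∀ (k : Fin p) (l : Fin q), k.val ≤ k₀ → l₀ < l.val → 0 < C k l)
    (hd : 0 < mongeDiff k₀ l₀ C) :
    (coordSupport mongeCoord (NE p q (k₀ + 1) (q - 1 - l₀))).Nonempty ∧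
      coordSupport mongeCoord (NE p q (k₀ + 1) (q - 1 - l₀)) ⊆ coordSupport mongeCoord C := by
  refine coordSupport_mongeCoord_nonempty_and_subset hk₀ hl₀ (fun k l h => ?_)
    (fun k l hk hl h => ?_) ?_ hd
  · simp only [NE, Matrix.of_apply] at h
    split_ifs at h with hkl
    · exact hB k l (by omega) (by omega)
    · exact absurd rfl h
  · rw [mongeDiff_NE _ _ hk hl] at h
    split_ifs at h with hkl
    · omega
    · exact absurd rfl h
  · rw [mongeDiff_NE _ _ hk₀ hl₀, if_pos (by omega)]
    exact one_ne_zero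

lemma coordSupport_SW_subset {C : Matrix (Fin p) (Fin q) ℝ} {k₀ l₀ : ℕ} (hk₀ : k₀ + 1 < p)
    (hl₀ : l₀ + 1 < q) (hB : ∀ (k : Fin p) (l : Fin q), k₀ < k.val → l.val ≤ l₀ → 0 < C k l)
    (hd : 0 < mongeDiff k₀ l₀ C) :
    (coordSupport mongeCoord (SW p q (p - 1 - k₀) (l₀ + 1))).Nonempty ∧
      coordSupport mongeCoord (SW p q (p - 1 - k₀) (l₀ + 1)) ⊆ coordSupport mongeCoord C := by
  refine coordSupport_mongeCoord_nonempty_and_subset hk₀ hl₀ (fun k l h => ?_)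
    (fun k l hk hl h => ?_) ?_ hd
  · simp only [SW, Matrix.of_apply] at h
    split_ifs at h with hkl
    · exact hB k l (by omega) (by omega)
    · exact absurd rfl h
  · rw [mongeDiff_SW _ _ hk hl] at h
    split_ifs at h with hkl
    · omega
    · exact absurd rfl h
  · rw [mongeDiff_SW _ _ hk₀ hl₀, if_pos (by omega)]
    exact one_ne_zero

lemma exists_mem_hull_Vpq_coordSupport_subset [NeZero p] [NeZero q]
    {C : Matrix (Fin p) (Fin q) ℝ} (hC : ∀ x, 0 ≤ mongeCoord x C)
    (hC₀ : (coordSupport mongeCoord C).Nonempty) :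
    ∃ G ∈ PointedCone.hull ℝ (Vpq p q), (∀ x, 0 ≤ mongeCoord x G) ∧
      (coordSupport mongeCoord G).Nonempty ∧
        coordSupport mongeCoord G ⊆ coordSupport mongeCoord C := by
  obtain ⟨hC', hM⟩ := forall_mongeCoord_nonneg_iff.1 hC
  by_cases hd : ∀ k l, k + 1 < p → l + 1 < q → mongeDiff k l C = 0
  · exact ⟨C, mem_hull_Vpq_of_mongeDiff_eq_zero hC' hd, hC, hC₀, subset_rfl⟩
  push Not at hd
  obtain ⟨k₀, l₀, hk₀, hl₀, hd⟩ := hd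
  replace hd := (isMonge_iff_mongeDiff_nonneg.1 hM k₀ l₀ hk₀ hl₀).lt_of_ne' hd
  rcases pos_northEast_or_pos_southWest hC' hM hd with hB | hB
  · exact ⟨_, NE_mem_hull_Vpq (by simp; omega) (by simp; omega), mongeCoord_NE_nonneg _ _,
      coordSupport_NE_subset hk₀ hl₀ hB hd⟩
  · exact ⟨_, SW_mem_hull_Vpq (by simp; omega) (by simp; omega), mongeCoord_SW_nonneg _ _,
      coordSupport_SW_subset hk₀ hl₀ hB hd⟩

theorem mem_hull_Vpq_of_nonneg_of_isMonge [NeZero p] [NeZero q] {C : Matrix (Fin p) (Fin q) ℝ}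
    (hC : ∀ k l, 0 ≤ C k l) (hM : IsMonge C) : C ∈ PointedCone.hull ℝ (Vpq p q) :=
  PointedCone.mem_of_forall_exists_coordSupport_subset _ mongeCoord
    (fun _ => eq_zero_of_coordSupport_mongeCoord_eq_empty)
    (fun _ => exists_mem_hull_Vpq_coordSupport_subset) (forall_mongeCoord_nonneg_iff.2 ⟨hC, hM⟩)

lemma mem_Mpq_iff {C : Matrix (Fin p) (Fin q) ℝ} :
    C ∈ Mpq p q ↔ (∀ x, 0 ≤ mongeCoord x C) ∧ entrySum C = 1 := by
  rw [forall_mongeCoord_nonneg_iff, entrySum_apply]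
  exact ⟨fun ⟨h₀, h₁, hM⟩ => ⟨⟨h₀, hM⟩, h₁⟩, fun ⟨⟨h₀, hM⟩, h₁⟩ => ⟨h₀, h₁, hM⟩⟩

lemma convex_Mpq : Convex ℝ (Mpq p q) := by
  have : Mpq p q = (⋂ x, {C | 0 ≤ mongeCoord x C}) ∩ {C | entrySum C = 1} := by
    ext C
    simp [mem_Mpq_iff]
  rw [this]
  exact (convex_iInter fun x => convex_halfSpace_ge (mongeCoord x).isLinear 0).inter
    (convex_hyperplane entrySum.isLinear 1)

lemma mongeCoord_nonneg_of_mem_Vpq {v : Matrix (Fin p) (Fin q) ℝ} (hv : v ∈ Vpq p q) :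
    ∀ x, 0 ≤ mongeCoord x v := by
  intro x
  rcases hv with ((⟨a, -, b, -, rfl⟩ | ⟨a, -, b, -, rfl⟩) | ⟨i, -, rfl⟩) | ⟨j, -, rfl⟩ <;>
    rw [map_smul, smul_eq_mul] <;> refine mul_nonneg (by positivity) ?_
  exacts [mongeCoord_NE_nonneg a b x, mongeCoord_SW_nonneg a b x, mongeCoord_HOR_nonneg i x,
    mongeCoord_VER_nonneg j x]

lemma entrySum_eq_one_of_mem_Vpq [NeZero p] [NeZero q] {v : Matrix (Fin p) (Fin q) ℝ}
    (hv : v ∈ Vpq p q) : entrySum v = 1 := by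
  rcases hv with ((⟨a, ha, b, hb, rfl⟩ | ⟨a, ha, b, hb, rfl⟩) | ⟨i, hi, rfl⟩) | ⟨j, hj, rfl⟩
  · rw [Finset.mem_Ico] at ha hb
    rw [map_smul, entrySum_NE ha.2.le hb.2.le, smul_eq_mul, one_div_mul_cancel]
    exact mul_ne_zero (Nat.cast_ne_zero.2 (by omega)) (Nat.cast_ne_zero.2 (by omega))
  · rw [Finset.mem_Ico] at ha hb
    rw [map_smul, entrySum_SW ha.2.le hb.2.le, smul_eq_mul, one_div_mul_cancel]
    exact mul_ne_zero (Nat.cast_ne_zero.2 (by omega)) (Nat.cast_ne_zero.2 (by omega))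
  · rw [map_smul, entrySum_HOR hi, smul_eq_mul, one_div_mul_cancel (NeZero.ne _)]
  · rw [map_smul, entrySum_VER hj, smul_eq_mul, one_div_mul_cancel (NeZero.ne _)]

lemma Vpq_subset_Mpq [NeZero p] [NeZero q] : Vpq p q ⊆ Mpq p q := fun _ hv =>
  mem_Mpq_iff.2 ⟨mongeCoord_nonneg_of_mem_Vpq hv, entrySum_eq_one_of_mem_Vpq hv⟩

theorem convexHull_Vpq [NeZero p] [NeZero q] : convexHull ℝ (Vpq p q) = Mpq p q := by
  refine (convexHull_min Vpq_subset_Mpq convex_Mpq).antisymm fun C hC => ?_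
  obtain ⟨hC, hC₁⟩ := mem_Mpq_iff.1 hC
  obtain ⟨hC₀, hM⟩ := forall_mongeCoord_nonneg_iff.1 hC
  exact mem_convexHull_of_mem_hull entrySum (fun v hv => entrySum_eq_one_of_mem_Vpq hv)
    (mem_hull_Vpq_of_nonneg_of_isMonge hC₀ hM) hC₁

end MongePolytope

lemma mongeDiff_eq_zero_iff_of_mem_Vpq {p q i j : ℕ} (hi1 : 1 ≤ i) (hip : i < p) (hj1 : 1 ≤ j)
    (hjq : j < q) {v : Matrix (Fin p) (Fin q) ℝ} (hv : v ∈ Vpq p q) :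
    mongeDiff (i - 1) (j - 1) v = 0 ↔
      v ∉ ({(1 / ((i : ℝ) * ((q - j : ℕ) : ℝ))) • NE p q i (q - j),
        (1 / (((p - i : ℕ) : ℝ) * (j : ℝ))) • SW p q (p - i) j} : Set _) := by
  have hk : i - 1 + 1 < p := by omega
  have hl : j - 1 + 1 < q := by omega
  constructor
  · rintro h (rfl | rfl) <;> revert h
    · rw [map_smul, mongeDiff_NE _ _ hk hl, if_pos (by omega), smul_eq_mul, mul_one]
      exact one_div_ne_zero (mul_ne_zero (Nat.cast_ne_zero.2 (by omega))
        (Nat.cast_ne_zero.2 (by omega)))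
    · rw [map_smul, mongeDiff_SW _ _ hk hl, if_pos (by omega), smul_eq_mul, mul_one]
      exact one_div_ne_zero (mul_ne_zero (Nat.cast_ne_zero.2 (by omega))
        (Nat.cast_ne_zero.2 (by omega)))
  · intro hv'
    rcases hv with ((⟨a, ha, b, hb, rfl⟩ | ⟨a, ha, b, hb, rfl⟩) | ⟨i', -, rfl⟩) | ⟨j', -, rfl⟩
    · rw [Finset.mem_Ico] at ha hb
      rw [map_smul, mongeDiff_NE _ _ hk hl]
      split_ifs with h
      · obtain ⟨rfl, rfl⟩ : a = i ∧ b = q - j := by omega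
        exact absurd (.inl rfl) hv'
      · exact smul_zero _
    · rw [Finset.mem_Ico] at ha hb
      rw [map_smul, mongeDiff_SW _ _ hk hl]
      split_ifs with h
      · obtain ⟨rfl, rfl⟩ : a = p - i ∧ b = j := by omega
        exact absurd (.inr rfl) hv'
      · exact smul_zero _
    · rw [map_smul, mongeDiff_HOR _ hk hl, smul_zero]
    · rw [map_smul, mongeDiff_VER _ hk hl, smul_zero]

/-- The facet `F_{ij}` of the Monge polytope, on which the Monge inequality for the
adjacent rows `i, i+1` and columns `j, j+1` (1-based) is tight, is the convex hull of the
vertex set with the two vertices `(1/(i(q-j))) • NE (i × (q-j))` and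
`(1/((p-i)j)) • SW ((p-i) × j)` removed. -/
theorem monge_polytope_facet_F (p q : ℕ)
    (i j : ℕ) (hi1 : 1 ≤ i) (hip : i < p) (hj1 : 1 ≤ j) (hjq : j < q) :
    {C | C ∈ Mpq p q ∧
        C ⟨i - 1, by omega⟩ ⟨j - 1, by omega⟩ + C ⟨i, by omega⟩ ⟨j, by omega⟩ =
          C ⟨i - 1, by omega⟩ ⟨j, by omega⟩ + C ⟨i, by omega⟩ ⟨j - 1, by omega⟩} =
      convexHull ℝ (Vpq p q \
        {(1 / ((i : ℝ) * ((q - j : ℕ) : ℝ))) • NE p q i (q - j),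
         (1 / (((p - i : ℕ) : ℝ) * (j : ℝ))) • SW p q (p - i) j}) := by
  have : NeZero p := ⟨by omega⟩
  have : NeZero q := ⟨by omega⟩
  set ψ : Matrix (Fin p) (Fin q) ℝ →ₗ[ℝ] ℝ := mongeDiff (i - 1) (j - 1)
  calc _ = Mpq p q ∩ {C | ψ C = 0} := by
        ext C
        simp only [Set.mem_ofPred_eq, Set.mem_inter_iff, ψ,
          mongeDiff_apply_of_lt C (k := i - 1) (l := j - 1) (by omega) (by omega),
          Nat.sub_add_cancel hi1, Nat.sub_add_cancel hj1]
        constructor <;> rintro ⟨hC, h⟩ <;> exact ⟨hC, by linarith⟩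
    _ = convexHull ℝ {v ∈ Vpq p q | ψ v = 0} := by
        rw [← convexHull_Vpq]
        exact convexHull_inter_setOf_eq_zero ψ fun v hv =>
          mongeCoord_nonneg_of_mem_Vpq hv (.inr (⟨i - 1, by omega⟩, ⟨j - 1, by omega⟩))
    _ = _ := by
        congr 1
        ext v
        exact and_congr_right fun hv => mongeDiff_eq_zero_iff_of_mem_Vpq hi1 hip hj1 hjq hv
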